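/- Conservation for the first-order (forward Euler) fully discrete DG scheme: let (C_n^m)_{0 ≤ n ≤ N_H−1, m ≥ 0}, (E^m)_{m ≥ 0}, (Φ^m)_{m ≥ 0} in V_h^k satisfy, for every m ≥ 0: (i) for each n ≠ 2, each cell I_j and each polynomial φ of degree ≤ k, (1/Δt)∫_{I_j}(C_n^{m+1} − C_n^m)φ dx + a_n^j(g_n^m, φ) + b_n^j(C^m, E^m, Φ^m, φ) = 0; (ii) (E^{m}, Φ^{m}) solves the DG Poisson scheme with source C_0^{m} for every m; (iii) with E^{m+1/2} = (E^m + E^{m+1})/2 and Φ^{m+1/2} = (Φ^m + Φ^{m+1})/2, the C_2 update (1/Δt)∫_{I_j}(C_2^{m+1} − C_2^m)φ dx + a_2^j(g_2^m, φ) + b_2^j(C^m, E^{m+1/2}, Φ^{m+1/2}, φ) = 0 holds for every cell and test polynomial. Then for every m ≥ 0: ∫_0^L C_0^m dx = ∫_0^L C_0^0 dx, ∫_0^L C_1^m dx = ∫_0^L C_1^0 dx, and the discrete total energy ℰ_h^m := (1/2)∫_0^L [ v_th³ (√2 C_2^m + C_0^m) + (E^m)² ] dx + (β/2) Σ_j ([Φ^m]_{j−1/2})²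 satisfies ℰ_h^m = ℰ_h^0. -/

import Mathlib

open MeasureTheory Finset

noncomputable section

/-- Left (minus) one-sided limit of the piecewise polynomial with cell
polynomials `u 0, …, u (Nx−1)` at the interface `x_{i+1/2} = X i`
(interfaces `i = 0` and `i = Nx` are identified periodically). -/
def dgMinus (Nx : ℕ) (X : ℕ → ℝ) (u : ℕ → Polynomial ℝ) (i : ℕ) : ℝ :=
  if i = 0 then (u (Nx - 1)).eval (X Nx) else (u (i - 1)).eval (X i)

/-- Right (plus) one-sided limit at the interface `X i` (periodic). -/
def dgPlus (Nx : ℕ) (X : ℕ → ℝ) (u : ℕ → Polynomial ℝ) (i : ℕ) : ℝ :=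
  if i = Nx then (u 0).eval (X 0) else (u i).eval (X i)

/-- Jump `[u] = u⁺ − u⁻` at the interface `X i`. -/
def dgJump (Nx : ℕ) (X : ℕ → ℝ) (u : ℕ → Polynomial ℝ) (i : ℕ) : ℝ :=
  dgPlus Nx X u i - dgMinus Nx X u i

/-- Average `{u} = (u⁺ + u⁻)/2` at the interface `X i`. -/
def dgAvg (Nx : ℕ) (X : ℕ → ℝ) (u : ℕ → Polynomial ℝ) (i : ℕ) : ℝ :=
  (dgPlus Nx X u i + dgMinus Nx X u i) / 2

/-- Integral over the cell `I_j = (X j, X (j+1))`. -/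
def cellInt (X : ℕ → ℝ) (j : ℕ) (f : ℝ → ℝ) : ℝ :=
  ∫ x in (X j)..(X (j + 1)), f x

/-- `g_n = v_th (√(n+1) C_{n+1} + √n C_{n−1})` on each cell (the convention
`C_{−1} = 0` is handled by `√0 = 0` and truncated subtraction). -/
def dgG (vth : ℝ) (Cf : ℕ → ℕ → Polynomial ℝ) (n j : ℕ) : Polynomial ℝ :=
  vth • (Real.sqrt (n + 1) • Cf (n + 1) j + Real.sqrt n • Cf (n - 1) j)

/-- Global Lax–Friedrichs flux
`ĝ_n = (1/2)(g_n⁻ + g_n⁺ − α (C_n⁺ − C_n⁻))` with `α = v_th √N_H`. -/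
def dgGhat (vth : ℝ) (NH Nx : ℕ) (X : ℕ → ℝ) (Cf : ℕ → ℕ → Polynomial ℝ)
    (n i : ℕ) : ℝ :=
  (1 / 2) * (dgMinus Nx X (dgG vth Cf n) i + dgPlus Nx X (dgG vth Cf n) i
    - vth * Real.sqrt NH *
        (dgPlus Nx X (Cf n) i - dgMinus Nx X (Cf n) i))

/-- `Ĉ_1 = ĝ_0 / v_th`. -/
def dgC1hat (vth : ℝ) (NH Nx : ℕ) (X : ℕ → ℝ) (Cf : ℕ → ℕ → Polynomial ℝ)
    (i : ℕ) : ℝ :=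
  dgGhat vth NH Nx X Cf 0 i / vth

/-- The convective DG form
`a_n^j(g_n, φ) = −∫_{I_j} g_n φ' + ĝ_{n,j+1/2} φ(x_{j+1/2}⁻) − ĝ_{n,j−1/2} φ(x_{j−1/2}⁺)`. -/
def dgA (vth : ℝ) (NH Nx : ℕ) (X : ℕ → ℝ) (Cf : ℕ → ℕ → Polynomial ℝ)
    (n j : ℕ) (φ : Polynomial ℝ) : ℝ :=
  -(cellInt X j fun x => (dgG vth Cf n j).eval x * φ.derivative.eval x)
    + dgGhat vth NH Nx X Cf n (j + 1) * φ.eval (X (j + 1))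
    - dgGhat vth NH Nx X Cf n j * φ.eval (X j)

/-- The residual `⟨r_1^j, φ⟩`. -/
def dgR1 (vth β : ℝ) (Nx : ℕ) (X : ℕ → ℝ) (Ef Φf : ℕ → Polynomial ℝ)
    (j : ℕ) (φ : Polynomial ℝ) : ℝ :=
  -(β / (2 * vth ^ 2)) *
    ((dgJump Nx X Φf j * dgJump Nx X Ef j) * φ.eval (X j)
      + (dgJump Nx X Φf (j + 1) * dgJump Nx X Ef (j + 1)) * φ.eval (X (j + 1)))

/-- The residual `⟨r_2^j, φ⟩`. -/
def dgR2 (vth : ℝ) (NH Nx : ℕ) (X : ℕ → ℝ) (Cf : ℕ → ℕ → Polynomial ℝ)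
    (Φf : ℕ → Polynomial ℝ) (j : ℕ) (φ : Polynomial ℝ) : ℝ :=
  (1 / (Real.sqrt 2 * vth)) *
    ((dgAvg Nx X (Cf 1) j - dgC1hat vth NH Nx X Cf j) * dgJump Nx X Φf j *
        φ.eval (X j)
      + (dgAvg Nx X (Cf 1) (j + 1) - dgC1hat vth NH Nx X Cf (j + 1)) *
          dgJump Nx X Φf (j + 1) * φ.eval (X (j + 1)))

/-- The residual `⟨r_n^j, φ⟩` (zero for `n ∉ {1, 2}`). -/
def dgR (vth β : ℝ) (NH Nx : ℕ) (X : ℕ → ℝ) (Cf : ℕ → ℕ → Polynomial ℝ)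
    (Ef Φf : ℕ → Polynomial ℝ) (n j : ℕ) (φ : Polynomial ℝ) : ℝ :=
  if n = 1 then dgR1 vth β Nx X Ef Φf j φ
  else if n = 2 then dgR2 vth NH Nx X Cf Φf j φ
  else 0

/-- The source form `b_n^j(C, E, Φ, φ) = −(√n/v_th) ∫_{I_j} E C_{n−1} φ − ⟨r_n^j, φ⟩`
(for `n = 0` this is `0` since `√0 = 0` and `r_0 = 0`). -/
def dgB (vth β : ℝ) (NH Nx : ℕ) (X : ℕ → ℝ) (Cf : ℕ → ℕ → Polynomial ℝ)
    (Ef Φf : ℕ → Polynomial ℝ) (n j : ℕ) (φ : Polynomial ℝ) : ℝ :=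
  -(Real.sqrt n / vth) *
      (cellInt X j fun x => (Ef j).eval x * (Cf (n - 1) j).eval x * φ.eval x)
    - dgR vth β NH Nx X Cf Ef Φf n j φ

/-- The local DG scheme for the Poisson equation with source `C_0`, with
fluxes `Φ̂ = {Φ}` and `Ê = {E} − β [Φ]`. -/
def dgPoisson (vth ρ0 β : ℝ) (k Nx : ℕ) (X : ℕ → ℝ)
    (C0f Ef Φf : ℕ → Polynomial ℝ) : Prop :=
  ∀ j < Nx, ∀ ψ : Polynomial ℝ, ψ.natDegree ≤ k →
    ((cellInt X j fun x => (Φf j).eval x * ψ.derivative.eval x)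
        - dgAvg Nx X Φf (j + 1) * ψ.eval (X (j + 1))
        + dgAvg Nx X Φf j * ψ.eval (X j)
      = cellInt X j fun x => (Ef j).eval x * ψ.eval x)
    ∧ (-(cellInt X j fun x => (Ef j).eval x * ψ.derivative.eval x)
        + (dgAvg Nx X Ef (j + 1) - β * dgJump Nx X Φf (j + 1)) *
            ψ.eval (X (j + 1))
        - (dgAvg Nx X Ef j - β * dgJump Nx X Φf j) * ψ.eval (X j)
      = cellInt X j fun x => (vth * (C0f j).eval x - ρ0) * ψ.eval x)

/-- `∫_0^L u dx` for a piecewise polynomial `u`. -/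
def dgTotInt (Nx : ℕ) (X : ℕ → ℝ) (u : ℕ → Polynomial ℝ) : ℝ :=
  ∑ j ∈ Finset.range Nx, cellInt X j fun x => (u j).eval x

/-- The discrete total energy
`ℰ_h = (1/2) ∫_0^L [v_th³(√2 C_2 + C_0) + E²] dx + (β/2) Σ_j [Φ]_{j−1/2}²`. -/
def dgEnergy (vth β : ℝ) (Nx : ℕ) (X : ℕ → ℝ) (Cf : ℕ → ℕ → Polynomial ℝ)
    (Ef Φf : ℕ → Polynomial ℝ) : ℝ :=
  (1 / 2) * ∑ j ∈ Finset.range Nx,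
      (cellInt X j fun x =>
        vth ^ 3 * (Real.sqrt 2 * (Cf 2 j).eval x + (Cf 0 j).eval x)
          + ((Ef j).eval x) ^ 2)
    + (β / 2) * ∑ j ∈ Finset.range Nx, (dgJump Nx X Φf j) ^ 2

end

/-!
Mass: testing the `C_0` equation with `φ = 1` kills the source, and the numerical fluxes
telescope over the periodic mesh.

Momentum: testing the `C_1` equation with `1` leaves `-(1/v_th) ∫ E C_0 + (β/v_th²) Σ [Φ][E]`.
The second Poisson equation tested with `E` gives `v_th ∫ C_0 E = β Σ [Φ][E]`, because
`∫ E = 0` (the first equation tested with `1`) and `∫ E E' = -Σ {E}[E]`.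

Energy: test the `C_2` update with `1` and the `C_0` update with `Φ^{m+1/2}`. Eliminating
`∫ E^{m+1/2} C_1` by the first Poisson equation (a discrete `E = -Φ'`) and comparing gives
`(√2 v_th³/2) Δ∫C_2 = -v_th ∫ (ΔC_0) Φ^{m+1/2}`. The discrete Green identity
`v_th ∫ C_0^a Φ^b - ρ0 ∫ Φ^b = ∫ E^a E^b + β Σ [Φ^a][Φ^b]`, applied to the four pairs of time
levels, identifies the right side with minus the change of `(1/2) ∫ E² + (β/2) Σ [Φ]²`.
-/

section Cells

variable {X : ℕ → ℝ} {j : ℕ}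

theorem cellInt_add {f g : ℝ → ℝ} (hf : Continuous f) (hg : Continuous g) :
    cellInt X j (fun x => f x + g x) = cellInt X j f + cellInt X j g :=
  intervalIntegral.integral_add (hf.intervalIntegrable _ _) (hg.intervalIntegrable _ _)

theorem cellInt_sub {f g : ℝ → ℝ} (hf : Continuous f) (hg : Continuous g) :
    cellInt X j (fun x => f x - g x) = cellInt X j f - cellInt X j g :=
  intervalIntegral.integral_sub (hf.intervalIntegrable _ _) (hg.intervalIntegrable _ _)

theorem cellInt_const_mul (c : ℝ) (f : ℝ → ℝ) :
    cellInt X j (fun x => c * f x) = c * cellInt X j f :=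
  intervalIntegral.integral_const_mul c f

theorem cellInt_eval_derivative (p : Polynomial ℝ) :
    cellInt X j (fun x => p.derivative.eval x) = p.eval (X (j + 1)) - p.eval (X j) :=
  intervalIntegral.integral_deriv_eq_sub' _ (funext fun _ => p.deriv)
    (fun _ _ => p.differentiableAt) p.derivative.continuous.continuousOn

end Cells

noncomputable def dgMid (u v : ℕ → Polynomial ℝ) : ℕ → Polynomial ℝ :=
  fun j => (2⁻¹ : ℝ) • (u j + v j)

section Interfaces

variable {Nx : ℕ} {X : ℕ → ℝ} (u v : ℕ → Polynomial ℝ) (i : ℕ)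

theorem dgMinus_succ (j : ℕ) : dgMinus Nx X u (j + 1) = (u j).eval (X (j + 1)) := by
  simp [dgMinus]

theorem dgPlus_of_lt {j : ℕ} (hj : j < Nx) : dgPlus Nx X u j = (u j).eval (X j) := by
  simp [dgPlus, hj.ne]

theorem dgMinus_last : dgMinus Nx X u Nx = dgMinus Nx X u 0 := by
  simp [dgMinus]

theorem dgPlus_last : dgPlus Nx X u Nx = dgPlus Nx X u 0 := by
  simp [dgPlus]

theorem dgJump_last : dgJump Nx X u Nx = dgJump Nx X u 0 := by
  simp only [dgJump, dgMinus_last, dgPlus_last]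

theorem dgAvg_last : dgAvg Nx X u Nx = dgAvg Nx X u 0 := by
  simp only [dgAvg, dgMinus_last, dgPlus_last]

theorem dgGhat_last (vth : ℝ) (NH : ℕ) (Cf : ℕ → ℕ → Polynomial ℝ) (n : ℕ) :
    dgGhat vth NH Nx X Cf n Nx = dgGhat vth NH Nx X Cf n 0 := by
  simp only [dgGhat, dgMinus_last, dgPlus_last]

theorem dgC1hat_last (vth : ℝ) (NH : ℕ) (Cf : ℕ → ℕ → Polynomial ℝ) :
    dgC1hat vth NH Nx X Cf Nx = dgC1hat vth NH Nx X Cf 0 := by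
  simp only [dgC1hat, dgGhat_last]

theorem dgPlus_mul : dgPlus Nx X (fun j => u j * v j) i = dgPlus Nx X u i * dgPlus Nx X v i := by
  unfold dgPlus; split_ifs <;> simp

theorem dgMinus_mul :
    dgMinus Nx X (fun j => u j * v j) i = dgMinus Nx X u i * dgMinus Nx X v i := by
  unfold dgMinus; split_ifs <;> simp

theorem dgPlus_mid : dgPlus Nx X (dgMid u v) i = 2⁻¹ * (dgPlus Nx X u i + dgPlus Nx X v i) := by
  unfold dgPlus dgMid; split_ifs <;> simp [mul_add]

theorem dgMinus_mid :
    dgMinus Nx X (dgMid u v) i = 2⁻¹ * (dgMinus Nx X u i + dgMinus Nx X v i) := by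
  unfold dgMinus dgMid; split_ifs <;> simp [mul_add]

theorem dgJump_one : dgJump Nx X (fun _ => 1) i = 0 := by
  unfold dgJump dgPlus dgMinus; split_ifs <;> simp

theorem dgJump_mul :
    dgJump Nx X (fun j => u j * v j) i
      = dgAvg Nx X u i * dgJump Nx X v i + dgJump Nx X u i * dgAvg Nx X v i := by
  simp only [dgJump, dgAvg, dgPlus_mul, dgMinus_mul]; ring

theorem dgJump_mid : dgJump Nx X (dgMid u v) i = 2⁻¹ * (dgJump Nx X u i + dgJump Nx X v i) := by
  simp only [dgJump, dgPlus_mid, dgMinus_mid]; ring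

end Interfaces

section PeriodicSums

variable {Nx : ℕ} {X : ℕ → ℝ}

theorem sum_range_succ_eq_of_last {F : ℕ → ℝ} (hF : F Nx = F 0) :
    ∑ j ∈ range Nx, F (j + 1) = ∑ j ∈ range Nx, F j := by
  have h := sum_range_succ F Nx
  rw [sum_range_succ', hF] at h
  linarith

theorem sum_add_succ_eq_of_last {F : ℕ → ℝ} (hF : F Nx = F 0) :
    ∑ j ∈ range Nx, (F j + F (j + 1)) = 2 * ∑ j ∈ range Nx, F j := by
  rw [sum_add_distrib, sum_range_succ_eq_of_last hF]; ring

theorem sum_flux_sub_eq_neg_sum_mul_dgJump {G : ℕ → ℝ} (hG : G Nx = G 0)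
    (u : ℕ → Polynomial ℝ) :
    ∑ j ∈ range Nx, (G (j + 1) * (u j).eval (X (j + 1)) - G j * (u j).eval (X j))
      = -∑ i ∈ range Nx, G i * dgJump Nx X u i := by
  have hcell : ∀ j ∈ range Nx,
      G (j + 1) * (u j).eval (X (j + 1)) - G j * (u j).eval (X j)
        = G (j + 1) * dgMinus Nx X u (j + 1) - G j * dgPlus Nx X u j := by
    intro j hj
    rw [dgMinus_succ, dgPlus_of_lt u (mem_range.mp hj)]
  rw [sum_congr rfl hcell, sum_sub_distrib,
    sum_range_succ_eq_of_last (F := fun i => G i * dgMinus Nx X u i)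
      (by simp only [hG, dgMinus_last]),
    ← sum_sub_distrib, ← sum_neg_distrib]
  exact sum_congr rfl fun i _ => by rw [dgJump]; ring

end PeriodicSums

noncomputable def dgInner (Nx : ℕ) (X : ℕ → ℝ) (u v : ℕ → Polynomial ℝ) : ℝ :=
  dgTotInt Nx X fun j => u j * v j

section Integrals

variable {Nx : ℕ} {X : ℕ → ℝ} (u v w : ℕ → Polynomial ℝ)

theorem dgTotInt_add : dgTotInt Nx X (fun j => u j + v j) = dgTotInt Nx X u + dgTotInt Nx X v := by
  simp only [dgTotInt, Polynomial.eval_add, ← sum_add_distrib]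
  exact sum_congr rfl fun j _ => cellInt_add (by fun_prop) (by fun_prop)

theorem dgTotInt_smul (c : ℝ) : dgTotInt Nx X (fun j => c • u j) = c * dgTotInt Nx X u := by
  simp only [dgTotInt, Polynomial.eval_smul, smul_eq_mul, mul_sum]
  exact sum_congr rfl fun j _ => cellInt_const_mul _ _

theorem dgTotInt_derivative :
    dgTotInt Nx X (fun j => (u j).derivative) = -∑ i ∈ range Nx, dgJump Nx X u i := by
  have h := sum_flux_sub_eq_neg_sum_mul_dgJump (Nx := Nx) (X := X) (G := fun _ => 1) rfl u
  simp only [one_mul] at h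
  rw [← h]
  exact sum_congr rfl fun j _ => cellInt_eval_derivative _

theorem dgInner_comm : dgInner Nx X u v = dgInner Nx X v u := by
  simp only [dgInner, mul_comm]

theorem dgInner_one_right : dgInner Nx X u (fun _ => 1) = dgTotInt Nx X u := by
  simp [dgInner]

theorem dgInner_zero_right : dgInner Nx X u (fun _ => 0) = 0 := by
  simp [dgInner, dgTotInt, cellInt]

theorem dgInner_smul_left (c : ℝ) : dgInner Nx X (fun j => c • u j) v = c * dgInner Nx X u v := by
  simp only [dgInner, smul_mul_assoc, dgTotInt_smul]

theorem dgInner_mid_left :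
    dgInner Nx X (dgMid u v) w = 2⁻¹ * (dgInner Nx X u w + dgInner Nx X v w) := by
  simp only [dgInner, dgMid, smul_mul_assoc, add_mul,
    dgTotInt_smul (fun j => u j * w j + v j * w j), dgTotInt_add]

theorem dgInner_mid_right :
    dgInner Nx X u (dgMid v w) = 2⁻¹ * (dgInner Nx X u v + dgInner Nx X u w) := by
  rw [dgInner_comm, dgInner_mid_left, dgInner_comm v, dgInner_comm w]

theorem derivative_dgMid (j : ℕ) :
    (dgMid u v j).derivative = dgMid (fun j => (u j).derivative) (fun j => (v j).derivative) j := by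
  simp [dgMid]

theorem dgInner_derivative_add_dgInner_derivative :
    dgInner Nx X u (fun j => (v j).derivative) + dgInner Nx X (fun j => (u j).derivative) v
      = -∑ i ∈ range Nx, (dgAvg Nx X u i * dgJump Nx X v i + dgJump Nx X u i * dgAvg Nx X v i) := by
  simp only [dgInner, ← dgTotInt_add, ← dgJump_mul, ← dgTotInt_derivative,
    Polynomial.derivative_mul, add_comm]

end Integrals

namespace dgPoisson

variable {vth ρ0 β : ℝ} {k Nx : ℕ} {X : ℕ → ℝ} {C0 E Φ : ℕ → Polynomial ℝ}

theorem sum_first (hP : dgPoisson vth ρ0 β k Nx X C0 E Φ) (ψ : ℕ → Polynomial ℝ)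
    (hψ : ∀ j, (ψ j).natDegree ≤ k) :
    dgInner Nx X Φ (fun j => (ψ j).derivative) + ∑ i ∈ range Nx, dgAvg Nx X Φ i * dgJump Nx X ψ i
      = dgInner Nx X E ψ := by
  have hcell : ∀ j ∈ range Nx, (cellInt X j fun x => (E j * ψ j).eval x)
      = (cellInt X j fun x => (Φ j * (ψ j).derivative).eval x)
        - (dgAvg Nx X Φ (j + 1) * (ψ j).eval (X (j + 1)) - dgAvg Nx X Φ j * (ψ j).eval (X j)) := by
    intro j hj
    simp only [Polynomial.eval_mul]
    linarith [(hP j (mem_range.mp hj) (ψ j) (hψ j)).1]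
  simp only [dgInner, dgTotInt]
  rw [sum_congr rfl hcell, sum_sub_distrib, sum_flux_sub_eq_neg_sum_mul_dgJump (dgAvg_last Φ)]
  ring

theorem sum_second (hP : dgPoisson vth ρ0 β k Nx X C0 E Φ) (ζ : ℕ → Polynomial ℝ)
    (hζ : ∀ j, (ζ j).natDegree ≤ k) :
    -dgInner Nx X E (fun j => (ζ j).derivative) - ∑ i ∈ range Nx, dgAvg Nx X E i * dgJump Nx X ζ i
        + β * ∑ i ∈ range Nx, dgJump Nx X Φ i * dgJump Nx X ζ i
      = vth * dgInner Nx X C0 ζ - ρ0 * dgTotInt Nx X ζ := by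
  set G : ℕ → ℝ := fun i => dgAvg Nx X E i - β * dgJump Nx X Φ i
  have hG : G Nx = G 0 := by simp only [G, dgAvg_last, dgJump_last]
  have hcell : ∀ j ∈ range Nx,
      vth * (cellInt X j fun x => (C0 j * ζ j).eval x) - ρ0 * (cellInt X j fun x => (ζ j).eval x)
        = -(cellInt X j fun x => (E j * (ζ j).derivative).eval x)
          + (G (j + 1) * (ζ j).eval (X (j + 1)) - G j * (ζ j).eval (X j)) := by
    intro j hj
    have hsource : (fun x => (vth * (C0 j).eval x - ρ0) * (ζ j).eval x)
        = fun x => vth * (C0 j * ζ j).eval x - ρ0 * (ζ j).eval x := by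
      ext x; simp only [Polynomial.eval_mul]; ring
    have h := (hP j (mem_range.mp hj) (ζ j) (hζ j)).2
    rw [hsource, cellInt_sub (by fun_prop) (by fun_prop), cellInt_const_mul,
      cellInt_const_mul] at h
    simp only [G, Polynomial.eval_mul] at h ⊢
    linarith
  have hsum := sum_congr rfl hcell
  rw [sum_sub_distrib, ← mul_sum, ← mul_sum, sum_add_distrib,
    sum_flux_sub_eq_neg_sum_mul_dgJump hG, sum_neg_distrib] at hsum
  simp only [G, sub_mul, sum_sub_distrib, mul_assoc, ← mul_sum] at hsum
  simp only [dgInner, dgTotInt]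
  linarith

theorem dgTotInt_field_eq_zero (hP : dgPoisson vth ρ0 β k Nx X C0 E Φ) : dgTotInt Nx X E = 0 := by
  have h := hP.sum_first (fun _ => 1) (fun _ => by simp)
  simp only [Polynomial.derivative_one, dgInner_zero_right, dgJump_one, mul_zero, sum_const_zero,
    add_zero, dgInner_one_right] at h
  exact h.symm

/-- The first Poisson equation, read through summed integration by parts, as the discrete
`E = -Φ'`. -/
theorem dgInner_field (hP : dgPoisson vth ρ0 β k Nx X C0 E Φ) (ψ : ℕ → Polynomial ℝ)
    (hψ : ∀ j, (ψ j).natDegree ≤ k) :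
    dgInner Nx X E ψ
      = -dgInner Nx X ψ (fun j => (Φ j).derivative)
        - ∑ i ∈ range Nx, dgAvg Nx X ψ i * dgJump Nx X Φ i := by
  have hfirst := hP.sum_first ψ hψ
  have hibp := dgInner_derivative_add_dgInner_derivative (Nx := Nx) (X := X) ψ Φ
  have hswap : ∑ i ∈ range Nx, dgJump Nx X ψ i * dgAvg Nx X Φ i
      = ∑ i ∈ range Nx, dgAvg Nx X Φ i * dgJump Nx X ψ i := sum_congr rfl fun i _ => mul_comm _ _
  rw [dgInner_comm (fun j => (ψ j).derivative), sum_add_distrib, hswap] at hibp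
  linarith

theorem charge_balance (hP : dgPoisson vth ρ0 β k Nx X C0 E Φ) (hE : ∀ j, (E j).natDegree ≤ k) :
    vth * dgInner Nx X E C0 = β * ∑ i ∈ range Nx, dgJump Nx X Φ i * dgJump Nx X E i := by
  have hsecond := hP.sum_second E hE
  have hibp := dgInner_derivative_add_dgInner_derivative (Nx := Nx) (X := X) E E
  have hswap : ∑ i ∈ range Nx, dgJump Nx X E i * dgAvg Nx X E i
      = ∑ i ∈ range Nx, dgAvg Nx X E i * dgJump Nx X E i := sum_congr rfl fun i _ => mul_comm _ _
  rw [dgInner_comm (fun j => (E j).derivative), sum_add_distrib, hswap] at hibp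
  rw [hP.dgTotInt_field_eq_zero, dgInner_comm C0] at hsecond
  linarith

theorem green_identity {C0' E' Φ' : ℕ → Polynomial ℝ} (hP : dgPoisson vth ρ0 β k Nx X C0 E Φ)
    (hP' : dgPoisson vth ρ0 β k Nx X C0' E' Φ') (hE : ∀ j, (E j).natDegree ≤ k)
    (hΦ' : ∀ j, (Φ' j).natDegree ≤ k) :
    vth * dgInner Nx X C0 Φ' - ρ0 * dgTotInt Nx X Φ'
      = dgInner Nx X E E' + β * ∑ i ∈ range Nx, dgJump Nx X Φ i * dgJump Nx X Φ' i := by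
  have hsecond := hP.sum_second Φ' hΦ'
  have hfield := hP'.dgInner_field E hE
  rw [dgInner_comm E'] at hfield
  linarith

theorem field_energy_increment {C0' E' Φ' : ℕ → Polynomial ℝ}
    (hP : dgPoisson vth ρ0 β k Nx X C0 E Φ) (hP' : dgPoisson vth ρ0 β k Nx X C0' E' Φ')
    (hE : ∀ j, (E j).natDegree ≤ k) (hE' : ∀ j, (E' j).natDegree ≤ k)
    (hΦ : ∀ j, (Φ j).natDegree ≤ k) (hΦ' : ∀ j, (Φ' j).natDegree ≤ k) :
    vth * (dgInner Nx X C0' (dgMid Φ Φ') - dgInner Nx X C0 (dgMid Φ Φ'))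
      = 2⁻¹ * (dgInner Nx X E' E' - dgInner Nx X E E)
        + β / 2 * (∑ i ∈ range Nx, dgJump Nx X Φ' i ^ 2 - ∑ i ∈ range Nx, dgJump Nx X Φ i ^ 2) := by
  have h₁ := hP'.green_identity hP hE' hΦ
  have h₂ := hP'.green_identity hP' hE' hΦ'
  have h₃ := hP.green_identity hP hE hΦ
  have h₄ := hP.green_identity hP' hE hΦ'
  have hswap : ∑ i ∈ range Nx, dgJump Nx X Φ' i * dgJump Nx X Φ i
      = ∑ i ∈ range Nx, dgJump Nx X Φ i * dgJump Nx X Φ' i := sum_congr rfl fun i _ => mul_comm _ _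
  rw [dgInner_comm E' E, hswap] at h₁
  simp only [dgInner_mid_right, sq]
  linear_combination (h₁ + h₂ - h₃ - h₄) / 2

end dgPoisson

section SchemeForms

variable {vth β : ℝ} {NH Nx : ℕ} {X : ℕ → ℝ} {Cf : ℕ → ℕ → Polynomial ℝ} {E Φ : ℕ → Polynomial ℝ}

theorem dgB_zero (j : ℕ) (φ : Polynomial ℝ) : dgB vth β NH Nx X Cf E Φ 0 j φ = 0 := by
  simp [dgB, dgR]

theorem sum_dgA (n : ℕ) (u : ℕ → Polynomial ℝ) :
    ∑ j ∈ range Nx, dgA vth NH Nx X Cf n j (u j)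
      = -dgInner Nx X (dgG vth Cf n) (fun j => (u j).derivative)
        - ∑ i ∈ range Nx, dgGhat vth NH Nx X Cf n i * dgJump Nx X u i := by
  rw [sub_eq_add_neg, ← sum_flux_sub_eq_neg_sum_mul_dgJump (dgGhat_last vth NH Cf n), dgInner,
    dgTotInt, ← sum_neg_distrib, ← sum_add_distrib]
  exact sum_congr rfl fun j _ => by simp only [dgA, Polynomial.eval_mul]; ring

theorem sum_dgA_one (n : ℕ) : ∑ j ∈ range Nx, dgA vth NH Nx X Cf n j 1 = 0 := by
  simpa [dgInner_zero_right, dgJump_one] using sum_dgA (vth := vth) (NH := NH) (Nx := Nx) (X := X)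
    (Cf := Cf) n (fun _ => 1)

theorem sum_dgA_zero (hv : vth ≠ 0) (u : ℕ → Polynomial ℝ) :
    ∑ j ∈ range Nx, dgA vth NH Nx X Cf 0 j (u j)
      = -vth * (dgInner Nx X (Cf 1) (fun j => (u j).derivative)
        + ∑ i ∈ range Nx, dgC1hat vth NH Nx X Cf i * dgJump Nx X u i) := by
  have hG : dgG vth Cf 0 = fun j => vth • Cf 1 j := funext fun j => by simp [dgG]
  have hGhat : ∀ i, dgGhat vth NH Nx X Cf 0 i = vth * dgC1hat vth NH Nx X Cf i := fun i => by
    rw [dgC1hat, mul_div_cancel₀ _ hv]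
  simp only [sum_dgA, hG, dgInner_smul_left, hGhat, mul_assoc, ← mul_sum]
  ring

theorem sum_dgB_one_one :
    ∑ j ∈ range Nx, dgB vth β NH Nx X Cf E Φ 1 j 1
      = -(1 / vth) * dgInner Nx X E (Cf 0)
        + β / vth ^ 2 * ∑ i ∈ range Nx, dgJump Nx X Φ i * dgJump Nx X E i := by
  have hF : dgJump Nx X Φ Nx * dgJump Nx X E Nx = dgJump Nx X Φ 0 * dgJump Nx X E 0 := by
    simp only [dgJump_last]
  have hcell : ∀ j ∈ range Nx, dgB vth β NH Nx X Cf E Φ 1 j 1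
      = -(1 / vth) * (cellInt X j fun x => (E j * Cf 0 j).eval x)
        + β / (2 * vth ^ 2) * (dgJump Nx X Φ j * dgJump Nx X E j
          + dgJump Nx X Φ (j + 1) * dgJump Nx X E (j + 1)) := fun j _ => by
    simp [dgB, dgR, dgR1]
  rw [sum_congr rfl hcell, sum_add_distrib, ← mul_sum, ← mul_sum,
    sum_add_succ_eq_of_last (F := fun i => dgJump Nx X Φ i * dgJump Nx X E i) hF]
  simp only [dgInner, dgTotInt]
  ring

theorem sum_dgB_two_one :
    ∑ j ∈ range Nx, dgB vth β NH Nx X Cf E Φ 2 j 1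
      = -(√2 / vth) * (dgInner Nx X E (Cf 1)
        + ∑ i ∈ range Nx, dgAvg Nx X (Cf 1) i * dgJump Nx X Φ i
        - ∑ i ∈ range Nx, dgC1hat vth NH Nx X Cf i * dgJump Nx X Φ i) := by
  set F : ℕ → ℝ := fun i => (dgAvg Nx X (Cf 1) i - dgC1hat vth NH Nx X Cf i) * dgJump Nx X Φ i
  have hF : F Nx = F 0 := by simp only [F, dgAvg_last, dgC1hat_last, dgJump_last]
  have hcell : ∀ j ∈ range Nx, dgB vth β NH Nx X Cf E Φ 2 j 1
      = -(√2 / vth) * (cellInt X j fun x => (E j * Cf 1 j).eval x)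
        - 1 / (√2 * vth) * (F j + F (j + 1)) := fun j _ => by
    simp [dgB, dgR, dgR2, F]
  have hs : 1 / (√2 * vth) * 2 = √2 / vth := by
    field_simp
    rw [Real.sq_sqrt zero_le_two]
  rw [sum_congr rfl hcell, sum_sub_distrib, ← mul_sum, ← mul_sum, sum_add_succ_eq_of_last hF]
  simp only [F, sub_mul, sum_sub_distrib, dgInner, dgTotInt]
  rw [← hs]
  ring

end SchemeForms

theorem natDegree_dgMid_le {k : ℕ} {u v : ℕ → Polynomial ℝ} (hu : ∀ j, (u j).natDegree ≤ k)
    (hv : ∀ j, (v j).natDegree ≤ k) (j : ℕ) : (dgMid u v j).natDegree ≤ k :=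
  (Polynomial.natDegree_smul_le _ _).trans
    ((Polynomial.natDegree_add_le _ _).trans (max_le (hu j) (hv j)))

theorem dgEnergy_eq {vth β : ℝ} {Nx : ℕ} {X : ℕ → ℝ} (Cf : ℕ → ℕ → Polynomial ℝ)
    (E Φ : ℕ → Polynomial ℝ) :
    dgEnergy vth β Nx X Cf E Φ
      = 2⁻¹ * (vth ^ 3 * (√2 * dgTotInt Nx X (Cf 2) + dgTotInt Nx X (Cf 0)) + dgInner Nx X E E)
        + β / 2 * ∑ i ∈ range Nx, dgJump Nx X Φ i ^ 2 := by
  have hcell : ∀ j ∈ range Nx,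
      (cellInt X j fun x => vth ^ 3 * (√2 * (Cf 2 j).eval x + (Cf 0 j).eval x) + (E j).eval x ^ 2)
        = vth ^ 3 * (√2 * (cellInt X j fun x => (Cf 2 j).eval x)
            + cellInt X j fun x => (Cf 0 j).eval x)
          + cellInt X j fun x => (E j * E j).eval x := fun j _ => by
    rw [cellInt_add (by fun_prop) (by fun_prop), cellInt_const_mul,
      cellInt_add (by fun_prop) (by fun_prop), cellInt_const_mul]
    simp only [Polynomial.eval_mul, sq]
  rw [dgEnergy, sum_congr rfl hcell, sum_add_distrib, ← mul_sum, sum_add_distrib, ← mul_sum]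
  simp only [dgInner, dgTotInt]
  ring

def IsEulerStep (Δt : ℝ) (k Nx : ℕ) (X : ℕ → ℝ) (c c' : ℕ → Polynomial ℝ)
    (a b : ℕ → Polynomial ℝ → ℝ) : Prop :=
  ∀ j < Nx, ∀ φ : Polynomial ℝ, φ.natDegree ≤ k →
    (1 / Δt) * ((cellInt X j fun x => (c' j).eval x * φ.eval x)
        - cellInt X j fun x => (c j).eval x * φ.eval x)
      + a j φ + b j φ = 0

namespace IsEulerStep

variable {Δt : ℝ} {k Nx : ℕ} {X : ℕ → ℝ} {c c' : ℕ → Polynomial ℝ} {a b : ℕ → Polynomial ℝ → ℝ}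

theorem dgInner_sub (h : IsEulerStep Δt k Nx X c c' a b) (hΔ : Δt ≠ 0) (u : ℕ → Polynomial ℝ)
    (hu : ∀ j, (u j).natDegree ≤ k) :
    dgInner Nx X c' u - dgInner Nx X c u = -Δt * ∑ j ∈ range Nx, (a j (u j) + b j (u j)) := by
  have hcell : ∀ j ∈ range Nx,
      (cellInt X j fun x => (c' j * u j).eval x) - (cellInt X j fun x => (c j * u j).eval x)
        = -Δt * (a j (u j) + b j (u j)) := fun j hj => by
    have h := h j (mem_range.mp hj) (u j) (hu j)
    simp only [Polynomial.eval_mul]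
    field_simp at h
    linarith
  simp only [dgInner, dgTotInt, ← sum_sub_distrib, mul_sum]
  exact sum_congr rfl hcell

theorem dgTotInt_sub (h : IsEulerStep Δt k Nx X c c' a b) (hΔ : Δt ≠ 0) :
    dgTotInt Nx X c' - dgTotInt Nx X c = -Δt * ∑ j ∈ range Nx, (a j 1 + b j 1) := by
  simpa [dgInner_one_right] using h.dgInner_sub hΔ (fun _ => 1) (fun _ => by simp)

variable {vth ρ0 β : ℝ} {NH : ℕ} {Cf : ℕ → ℕ → Polynomial ℝ} {E Φ : ℕ → Polynomial ℝ}

theorem dgTotInt_eq_of_mode_zero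
    (h : IsEulerStep Δt k Nx X (Cf 0) c' (dgA vth NH Nx X Cf 0) (dgB vth β NH Nx X Cf E Φ 0))
    (hΔ : Δt ≠ 0) : dgTotInt Nx X c' = dgTotInt Nx X (Cf 0) := by
  have h := h.dgTotInt_sub hΔ
  rw [sum_add_distrib, sum_dgA_one] at h
  simp only [dgB_zero, sum_const_zero, add_zero, mul_zero] at h
  linarith

theorem dgTotInt_eq_of_mode_one
    (h : IsEulerStep Δt k Nx X (Cf 1) c' (dgA vth NH Nx X Cf 1) (dgB vth β NH Nx X Cf E Φ 1))
    (hv : vth ≠ 0) (hΔ : Δt ≠ 0) (hP : dgPoisson vth ρ0 β k Nx X (Cf 0) E Φ)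
    (hE : ∀ j, (E j).natDegree ≤ k) : dgTotInt Nx X c' = dgTotInt Nx X (Cf 1) := by
  have hforce : -(1 / vth) * dgInner Nx X E (Cf 0)
      + β / vth ^ 2 * ∑ i ∈ range Nx, dgJump Nx X Φ i * dgJump Nx X E i = 0 := by
    rw [div_mul_eq_mul_div, ← hP.charge_balance hE]
    field_simp
    ring
  have h := h.dgTotInt_sub hΔ
  rw [sum_add_distrib, sum_dgA_one, sum_dgB_one_one, hforce] at h
  linarith

end IsEulerStep

theorem dgEnergy_eq_of_isEulerStep {Δt vth ρ0 β : ℝ} {k Nx NH : ℕ} {X : ℕ → ℝ}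
    {Cf Cf' : ℕ → ℕ → Polynomial ℝ} {E E' Φ Φ' : ℕ → Polynomial ℝ} (hv : vth ≠ 0) (hΔ : Δt ≠ 0)
    (h0 : IsEulerStep Δt k Nx X (Cf 0) (Cf' 0) (dgA vth NH Nx X Cf 0)
      (dgB vth β NH Nx X Cf E Φ 0))
    (h2 : IsEulerStep Δt k Nx X (Cf 2) (Cf' 2) (dgA vth NH Nx X Cf 2)
      (dgB vth β NH Nx X Cf (dgMid E E') (dgMid Φ Φ') 2))
    (hP : dgPoisson vth ρ0 β k Nx X (Cf 0) E Φ) (hP' : dgPoisson vth ρ0 β k Nx X (Cf' 0) E' Φ')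
    (hC1 : ∀ j, (Cf 1 j).natDegree ≤ k) (hE : ∀ j, (E j).natDegree ≤ k)
    (hE' : ∀ j, (E' j).natDegree ≤ k) (hΦ : ∀ j, (Φ j).natDegree ≤ k)
    (hΦ' : ∀ j, (Φ' j).natDegree ≤ k) :
    dgEnergy vth β Nx X Cf' E' Φ' = dgEnergy vth β Nx X Cf E Φ := by
  set Φh := dgMid Φ Φ'
  have hmass := h0.dgTotInt_eq_of_mode_zero hΔ
  have hfield := hP.field_energy_increment hP' hE hE' hΦ hΦ'
  have hmode0 : dgInner Nx X (Cf' 0) Φh - dgInner Nx X (Cf 0) Φh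
      = Δt * vth * (dgInner Nx X (Cf 1) (fun j => (Φh j).derivative)
        + ∑ i ∈ range Nx, dgC1hat vth NH Nx X Cf i * dgJump Nx X Φh i) := by
    rw [h0.dgInner_sub hΔ Φh (natDegree_dgMid_le hΦ hΦ'), sum_add_distrib, sum_dgA_zero hv]
    simp only [dgB_zero, sum_const_zero]
    ring
  have hmode2 : dgTotInt Nx X (Cf' 2) - dgTotInt Nx X (Cf 2)
      = Δt * (√2 / vth) * (dgInner Nx X (dgMid E E') (Cf 1)
        + ∑ i ∈ range Nx, dgAvg Nx X (Cf 1) i * dgJump Nx X Φh i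
        - ∑ i ∈ range Nx, dgC1hat vth NH Nx X Cf i * dgJump Nx X Φh i) := by
    rw [h2.dgTotInt_sub hΔ, sum_add_distrib, sum_dgA_one, sum_dgB_two_one]
    ring
  have hfieldh : dgInner Nx X (dgMid E E') (Cf 1)
      = -dgInner Nx X (Cf 1) (fun j => (Φh j).derivative)
        - ∑ i ∈ range Nx, dgAvg Nx X (Cf 1) i * dgJump Nx X Φh i := by
    simp only [Φh, derivative_dgMid, dgInner_mid_left, dgInner_mid_right, dgJump_mid, mul_add,
      sum_add_distrib, mul_left_comm _ (2⁻¹ : ℝ), ← mul_sum, hP.dgInner_field _ hC1,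
      hP'.dgInner_field _ hC1]
    ring
  have hsource : vth ^ 2 * (dgTotInt Nx X (Cf' 2) - dgTotInt Nx X (Cf 2))
      = -(√2 * (dgInner Nx X (Cf' 0) Φh - dgInner Nx X (Cf 0) Φh)) := by
    rw [hmode2, hfieldh, hmode0]
    field_simp
    ring
  rw [dgEnergy_eq, dgEnergy_eq]
  linear_combination (vth * √2 / 2) * hsource + vth ^ 3 / 2 * hmass - hfield
    - vth * (dgInner Nx X (Cf' 0) Φh - dgInner Nx X (Cf 0) Φh) / 2 * Real.sq_sqrt zero_le_two

theorem dg_euler_conservation_general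
    (vth ρ0 β Δt : ℝ) (k Nx NH : ℕ)
    (hvth : 0 < vth) (hΔt : 0 < Δt)
    (hNH : 3 ≤ NH)
    -- the partition `0 = x_{1/2} < … < x_{Nx+1/2} = L`
    (X : ℕ → ℝ)
    -- the numerical solution at each time step, cell by cell
    (C : ℕ → ℕ → ℕ → Polynomial ℝ) (E Φ : ℕ → ℕ → Polynomial ℝ)
    -- membership in `V_h^k`
    (hdegC : ∀ n m j, (C n m j).natDegree ≤ k)
    (hdegE : ∀ m j, (E m j).natDegree ≤ k)
    (hdegΦ : ∀ m j, (Φ m j).natDegree ≤ k)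
    -- (i) forward Euler step for every mode `n ≠ 2`
    (hStep : ∀ m : ℕ, ∀ n < NH, n ≠ 2 → ∀ j < Nx,
      ∀ φ : Polynomial ℝ, φ.natDegree ≤ k →
      (1 / Δt) * ((cellInt X j fun x => (C n (m + 1) j).eval x * φ.eval x)
          - cellInt X j fun x => (C n m j).eval x * φ.eval x)
        + dgA vth NH Nx X (fun p i => C p m i) n j φ
        + dgB vth β NH Nx X (fun p i => C p m i) (E m) (Φ m) n j φ = 0)
    -- (ii) the DG Poisson solver at every time step
    (hPoisson : ∀ m : ℕ, dgPoisson vth ρ0 β k Nx X (C 0 m) (E m) (Φ m))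
    -- (iii) update of `C_2` with the time-averaged field
    -- `E^{m+1/2} = (E^m + E^{m+1})/2`, `Φ^{m+1/2} = (Φ^m + Φ^{m+1})/2`
    (hStep2 : ∀ m : ℕ, ∀ j < Nx, ∀ φ : Polynomial ℝ, φ.natDegree ≤ k →
      (1 / Δt) * ((cellInt X j fun x => (C 2 (m + 1) j).eval x * φ.eval x)
          - cellInt X j fun x => (C 2 m j).eval x * φ.eval x)
        + dgA vth NH Nx X (fun p i => C p m i) 2 j φ
        + dgB vth β NH Nx X (fun p i => C p m i)
            (fun i => (2⁻¹ : ℝ) • (E m i + E (m + 1) i))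
            (fun i => (2⁻¹ : ℝ) • (Φ m i + Φ (m + 1) i)) 2 j φ = 0) :
    ∀ m : ℕ,
      dgTotInt Nx X (C 0 m) = dgTotInt Nx X (C 0 0)
      ∧ dgTotInt Nx X (C 1 m) = dgTotInt Nx X (C 1 0)
      ∧ dgEnergy vth β Nx X (fun p i => C p m i) (E m) (Φ m)
          = dgEnergy vth β Nx X (fun p i => C p 0 i) (E 0) (Φ 0) := by
  have hv := hvth.ne'
  have hΔ := hΔt.ne'
  have mass (m : ℕ) : dgTotInt Nx X (C 0 (m + 1)) = dgTotInt Nx X (C 0 m) :=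
    IsEulerStep.dgTotInt_eq_of_mode_zero (Cf := fun p i => C p m i)
      (hStep m 0 (by omega) (by omega)) hΔ
  have momentum (m : ℕ) : dgTotInt Nx X (C 1 (m + 1)) = dgTotInt Nx X (C 1 m) :=
    IsEulerStep.dgTotInt_eq_of_mode_one (Cf := fun p i => C p m i) (hStep m 1 (by omega) (by omega))
      hv hΔ (hPoisson m) (hdegE m)
  have energy (m : ℕ) : dgEnergy vth β Nx X (fun p i => C p (m + 1) i) (E (m + 1)) (Φ (m + 1))
      = dgEnergy vth β Nx X (fun p i => C p m i) (E m) (Φ m) :=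
    dgEnergy_eq_of_isEulerStep hv hΔ (hStep m 0 (by omega) (by omega)) (hStep2 m) (hPoisson m)
      (hPoisson (m + 1)) (hdegC 1 m) (hdegE m) (hdegE (m + 1)) (hdegΦ m) (hdegΦ (m + 1))
  intro m
  induction m with
  | zero => exact ⟨rfl, rfl, rfl⟩
  | succ m ih => exact ⟨(mass m).trans ih.1, (momentum m).trans ih.2.1, (energy m).trans ih.2.2⟩

/-- Conservation of discrete mass, momentum and total energy for the
first-order (forward Euler) fully discrete DG scheme. -/
theorem dg_euler_conservation
    (L vth ρ0 β Δt : ℝ) (k Nx NH : ℕ)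
    (hL : 0 < L) (hvth : 0 < vth) (hβ : 0 < β) (hΔt : 0 < Δt)
    (hNx : 1 ≤ Nx) (hNH : 3 ≤ NH)
    -- the partition `0 = x_{1/2} < … < x_{Nx+1/2} = L`
    (X : ℕ → ℝ) (hX0 : X 0 = 0) (hXL : X Nx = L)
    (hXmono : ∀ j < Nx, X j < X (j + 1))
    -- the numerical solution at each time step, cell by cell
    (C : ℕ → ℕ → ℕ → Polynomial ℝ) (E Φ : ℕ → ℕ → Polynomial ℝ)
    -- membership in `V_h^k`
    (hdegC : ∀ n m j, (C n m j).natDegree ≤ k)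
    (hdegE : ∀ m j, (E m j).natDegree ≤ k)
    (hdegΦ : ∀ m j, (Φ m j).natDegree ≤ k)
    -- truncation convention `C_{N_H} = 0` (and beyond)
    (hCtop : ∀ n, NH ≤ n → ∀ m j, C n m j = 0)
    -- (i) forward Euler step for every mode `n ≠ 2`
    (hStep : ∀ m : ℕ, ∀ n < NH, n ≠ 2 → ∀ j < Nx,
      ∀ φ : Polynomial ℝ, φ.natDegree ≤ k →
      (1 / Δt) * ((cellInt X j fun x => (C n (m + 1) j).eval x * φ.eval x)
          - cellInt X j fun x => (C n m j).eval x * φ.eval x)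
        + dgA vth NH Nx X (fun p i => C p m i) n j φ
        + dgB vth β NH Nx X (fun p i => C p m i) (E m) (Φ m) n j φ = 0)
    -- (ii) the DG Poisson solver at every time step
    (hPoisson : ∀ m : ℕ, dgPoisson vth ρ0 β k Nx X (C 0 m) (E m) (Φ m))
    -- (iii) update of `C_2` with the time-averaged field
    -- `E^{m+1/2} = (E^m + E^{m+1})/2`, `Φ^{m+1/2} = (Φ^m + Φ^{m+1})/2`
    (hStep2 : ∀ m : ℕ, ∀ j < Nx, ∀ φ : Polynomial ℝ, φ.natDegree ≤ k →
      (1 / Δt) * ((cellInt X j fun x => (C 2 (m + 1) j).eval x * φ.eval x)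
          - cellInt X j fun x => (C 2 m j).eval x * φ.eval x)
        + dgA vth NH Nx X (fun p i => C p m i) 2 j φ
        + dgB vth β NH Nx X (fun p i => C p m i)
            (fun i => (2⁻¹ : ℝ) • (E m i + E (m + 1) i))
            (fun i => (2⁻¹ : ℝ) • (Φ m i + Φ (m + 1) i)) 2 j φ = 0) :
    ∀ m : ℕ,
      dgTotInt Nx X (C 0 m) = dgTotInt Nx X (C 0 0)
      ∧ dgTotInt Nx X (C 1 m) = dgTotInt Nx X (C 1 0)
      ∧ dgEnergy vth β Nx X (fun p i => C p m i) (E m) (Φ m)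
          = dgEnergy vth β Nx X (fun p i => C p 0 i) (E 0) (Φ 0) :=
  dg_euler_conservation_general vth ρ0 β Δt k Nx NH hvth hΔt hNH X C E Φ hdegC hdegE hdegΦ hStep
    hPoisson hStep2
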